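/- arXiv:0912.0988 — 2 statements merged into one kernel-verified Lean document; each statement's English description precedes it below -/
import Mathlib

section
/- Let p be an odd prime, n ≥ 0 an integer, R = p^{n - 1/(p-1)}, and let μ, ν be bounded distributions on the Tate algebra of radius R over ℂ_p. Define the Fourier transform F(μ) to be the formal power series Σ_k (μ(x^k)/k!) T^k ∈ ℂ_p[[T]]. Then: (1) F is injective, i.e. F(μ) = 0 implies μ = 0; (2) F(μ*ν) = F(μ)·F(ν) as formal power series, where μ*ν is the convolution with moments (μ*ν)(x^k) = Σ_{m=0}^{k} binom(k,m) μ(x^m) ν(x^{k-m}); and (3) F sends the Dirac distribution at 0 (the functional f ↦ f(0), i.e. f ↦ a_0) to the constant power series 1. In particular the bounded distributions on the Tate algebra of radius R form a commutative integral domain under convolution. -/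
open Filter Topology

/-- A coefficient sequence belongs to the Tate algebra of radius `R`:
`‖a k‖ R^k → 0`. -/
def IsTate {K : Type*} [NormedField K] (R : ℝ) (a : ℕ → K) : Prop :=
  Filter.Tendsto (fun k => ‖a k‖ * R ^ k) Filter.atTop (nhds 0)

/-- The (Gauss = sup) norm on the Tate algebra of radius `R`:
`‖∑ a_k x^k‖ = sup_k ‖a_k‖ R^k`. -/
noncomputable def tateNorm {K : Type*} [NormedField K] (R : ℝ) (a : ℕ → K) : ℝ :=
  ⨆ k : ℕ, ‖a k‖ * R ^ k

/-- A bounded distribution on the Tate algebra of radius `R` over `K`: a `K`-linear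
functional on the Tate algebra (identified with its coefficient sequences) that is
bounded with respect to the Gauss norm. -/
structure BDist (K : Type*) [NormedField K] (R : ℝ) where
  toFun : {a : ℕ → K // IsTate R a} → K
  map_add' : ∀ a b c : {a : ℕ → K // IsTate R a},
    (c : ℕ → K) = (a : ℕ → K) + (b : ℕ → K) → toFun c = toFun a + toFun b
  map_smul' : ∀ (r : K) (a b : {a : ℕ → K // IsTate R a}),
    (b : ℕ → K) = r • (a : ℕ → K) → toFun b = r * toFun a
  bound' : ∃ C : ℝ, ∀ a : {a : ℕ → K // IsTate R a}, ‖toFun a‖ ≤ C * tateNorm R (a : ℕ → K)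

/-- The monomial `x^k` as an element of the Tate algebra of radius `R`. -/
noncomputable def tateMono {K : Type*} [NormedField K] (R : ℝ) (k : ℕ) :
    {a : ℕ → K // IsTate R a} :=
  ⟨fun j => if j = k then 1 else 0, by
    apply Filter.Tendsto.congr' _ tendsto_const_nhds
    filter_upwards [Filter.eventually_ge_atTop (k + 1)] with j hj
    have hjk : j ≠ k := by omega
    simp [hjk]⟩

/-- The Fourier transform of a bounded distribution: the formal power series
`F(μ) = ∑_k (μ(x^k)/k!) T^k`. -/
noncomputable def fourierT {K : Type*} [NormedField K] {R : ℝ} (μ : BDist K R) :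
    PowerSeries K :=
  PowerSeries.mk fun k => μ.toFun (tateMono R k) / (k.factorial : K)

/-!
A bounded distribution is determined by its moments: writing `f` as a polynomial of degree
`< N` plus a tail, linearity kills the polynomial part, and boundedness makes the value on the
tail as small as the Gauss norm of the tail, which tends to `0`. Injectivity of the Fourier
transform is then coefficientwise division by `k!`, and multiplicativity is the binomial formula
`binom(k, m) / k! = 1 / (m! (k - m)!)`.
-/

section TateAlgebra

variable {K : Type*} [NormedField K] {R : ℝ}

theorem IsTate.const_smul {a : ℕ → K} (ha : IsTate R a) (r : K) : IsTate R (r • a) := by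
  simpa [IsTate, norm_mul, mul_assoc] using ha.const_mul ‖r‖

noncomputable def tateTrunc (a : {a : ℕ → K // IsTate R a}) (N : ℕ) :
    {a : ℕ → K // IsTate R a} :=
  ⟨fun j => if j < N then a.1 j else 0, by
    refine tendsto_const_nhds.congr' ?_
    filter_upwards [eventually_ge_atTop N] with j hj
    simp [not_lt.2 hj]⟩

noncomputable def tateTail (a : {a : ℕ → K // IsTate R a}) (N : ℕ) :
    {a : ℕ → K // IsTate R a} :=
  ⟨fun j => if j < N then 0 else a.1 j, by
    refine a.2.congr' ?_
    filter_upwards [eventually_ge_atTop N] with j hj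
    simp [not_lt.2 hj]⟩

theorem tateTrunc_add_tateTail (a : {a : ℕ → K // IsTate R a}) (N : ℕ) :
    (tateTrunc a N).1 + (tateTail a N).1 = a.1 := by
  funext j
  simp only [tateTrunc, tateTail, Pi.add_apply]
  split_ifs <;> simp

theorem tateTrunc_succ (a : {a : ℕ → K // IsTate R a}) (N : ℕ) :
    (tateTrunc a (N + 1)).1 = (tateTrunc a N).1 + a.1 N • (tateMono R N).1 := by
  funext j
  simp only [tateTrunc, tateMono, Pi.add_apply, Pi.smul_apply, smul_eq_mul]
  rcases lt_trichotomy j N with h | rfl | h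
  · simp [h, Nat.lt_succ_of_lt h, h.ne]
  · simp
  · simp [not_lt.2 h.le, h.ne', show ¬ j < N + 1 by omega]

theorem tendsto_tateNorm_tateTail (hR : 0 ≤ R) (a : {a : ℕ → K // IsTate R a}) :
    Tendsto (fun N => tateNorm R (tateTail a N).1) atTop (𝓝 0) := by
  rw [Metric.tendsto_atTop]
  intro ε hε
  obtain ⟨N₀, hN₀⟩ := Metric.tendsto_atTop.1 a.2 (ε / 2) (half_pos hε)
  refine ⟨N₀, fun N hN => ?_⟩
  have hnonneg : 0 ≤ tateNorm R (tateTail a N).1 :=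
    Real.iSup_nonneg fun k => by positivity
  have hle : tateNorm R (tateTail a N).1 ≤ ε / 2 := by
    refine ciSup_le fun j => ?_
    simp only [tateTail]
    split_ifs with hj
    · simpa using (half_pos hε).le
    · exact (le_abs_self _).trans (by simpa using (hN₀ j (by omega)).le)
  rw [Real.dist_eq, sub_zero, abs_of_nonneg hnonneg]
  linarith

end TateAlgebra

namespace BDist

variable {K : Type*} [NormedField K] {R : ℝ} (μ : BDist K R)

theorem toFun_eq_zero_of_coe_eq_zero {a : {a : ℕ → K // IsTate R a}} (ha : a.1 = 0) :
    μ.toFun a = 0 := by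
  simpa using μ.map_smul' 0 a a (by simp [ha])

variable {μ}

theorem toFun_tateTrunc_eq_zero (h : ∀ k, μ.toFun (tateMono R k) = 0)
    (a : {a : ℕ → K // IsTate R a}) (N : ℕ) : μ.toFun (tateTrunc a N) = 0 := by
  induction N with
  | zero => exact μ.toFun_eq_zero_of_coe_eq_zero (funext fun j => by simp [tateTrunc])
  | succ N ih =>
    let xN : {a : ℕ → K // IsTate R a} :=
      ⟨a.1 N • (tateMono R N).1, (tateMono R N).2.const_smul _⟩
    rw [μ.map_add' _ xN _ (tateTrunc_succ a N), ih, μ.map_smul' _ _ xN rfl, h, mul_zero, add_zero]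

theorem toFun_eq_zero_of_moments_eq_zero (hR : 0 ≤ R) (h : ∀ k, μ.toFun (tateMono R k) = 0)
    (a : {a : ℕ → K // IsTate R a}) : μ.toFun a = 0 := by
  obtain ⟨C, hC⟩ := μ.bound'
  have hvalue : ∀ N, μ.toFun a = μ.toFun (tateTail a N) := fun N => by
    rw [μ.map_add' _ _ a (tateTrunc_add_tateTail a N).symm, toFun_tateTrunc_eq_zero h, zero_add]
  have hlim : Tendsto (fun N => C * tateNorm R (tateTail a N).1) atTop (𝓝 0) := by
    simpa using (tendsto_tateNorm_tateTail hR a).const_mul C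
  exact norm_le_zero_iff.1 <| ge_of_tendsto' hlim fun N => hvalue N ▸ hC _

end BDist

def IsConvolution {K : Type*} [NormedField K] {R : ℝ} (μ ν σ : BDist K R) : Prop :=
  ∀ k : ℕ, σ.toFun (tateMono R k) =
    ∑ m ∈ Finset.range (k + 1),
      (k.choose m : K) * μ.toFun (tateMono R m) * ν.toFun (tateMono R (k - m))

section Fourier

variable {K : Type*} [NormedField K] {R : ℝ}

theorem coeff_fourierT (μ : BDist K R) (k : ℕ) :
    PowerSeries.coeff k (fourierT μ) = μ.toFun (tateMono R k) / (k.factorial : K) :=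
  PowerSeries.coeff_mk _ _

theorem fourierT_eq_zero_iff [CharZero K] (hR : 0 ≤ R) {μ : BDist K R} :
    fourierT μ = 0 ↔ ∀ a : {a : ℕ → K // IsTate R a}, μ.toFun a = 0 := by
  refine ⟨fun h => μ.toFun_eq_zero_of_moments_eq_zero hR fun k => ?_, fun h => ?_⟩
  · simpa [coeff_fourierT, k.factorial_ne_zero] using congrArg (PowerSeries.coeff k) h
  · ext k
    simp [coeff_fourierT, h]

theorem fourierT_of_isConvolution [CharZero K] {μ ν σ : BDist K R} (h : IsConvolution μ ν σ) :
    fourierT σ = fourierT μ * fourierT ν := by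
  ext k
  rw [PowerSeries.coeff_mul, Finset.Nat.sum_antidiagonal_eq_sum_range_succ_mk, coeff_fourierT,
    h, Finset.sum_div]
  refine Finset.sum_congr rfl fun m hm => ?_
  have hmk : m ≤ k := Nat.lt_succ_iff.1 (Finset.mem_range.1 hm)
  rw [coeff_fourierT, coeff_fourierT, Nat.cast_choose K hmk]
  have := k.factorial_ne_zero
  have := m.factorial_ne_zero
  have := (k - m).factorial_ne_zero
  field_simp

theorem fourierT_dirac {δ : BDist K R}
    (h : ∀ a : {a : ℕ → K // IsTate R a}, δ.toFun a = (a : ℕ → K) 0) : fourierT δ = 1 := by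
  ext k
  rcases eq_or_ne k 0 with rfl | hk
  · simp [coeff_fourierT, h, tateMono]
  · simp [coeff_fourierT, h, tateMono, hk, hk.symm]

end Fourier

theorem statement13_general (p : ℕ)
    {K : Type*} [NormedField K]
    [CharZero K]
    (n : ℕ) (R : ℝ) (hR : R = (p : ℝ) ^ ((n : ℝ) - 1 / ((p : ℝ) - 1))) :
    (∀ μ : BDist K R, fourierT μ = 0 → ∀ a : {a : ℕ → K // IsTate R a}, μ.toFun a = 0) ∧
    (∀ μ ν σ : BDist K R,
        (∀ k : ℕ, σ.toFun (tateMono R k) =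
            ∑ m ∈ Finset.range (k + 1),
              (k.choose m : K) * μ.toFun (tateMono R m) * ν.toFun (tateMono R (k - m))) →
        fourierT σ = fourierT μ * fourierT ν) ∧
    (∀ δ : BDist K R, (∀ a : {a : ℕ → K // IsTate R a}, δ.toFun a = (a : ℕ → K) 0) →
        fourierT δ = 1) ∧
    (∀ μ ν σ : BDist K R,
        (∀ k : ℕ, σ.toFun (tateMono R k) =
            ∑ m ∈ Finset.range (k + 1),
              (k.choose m : K) * μ.toFun (tateMono R m) * ν.toFun (tateMono R (k - m))) →
        (∀ a : {a : ℕ → K // IsTate R a}, σ.toFun a = 0) →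
        (∀ a : {a : ℕ → K // IsTate R a}, μ.toFun a = 0) ∨
        (∀ a : {a : ℕ → K // IsTate R a}, ν.toFun a = 0)) := by
  have hR₀ : 0 ≤ R := hR ▸ Real.rpow_nonneg (Nat.cast_nonneg p) _
  refine ⟨fun μ => (fourierT_eq_zero_iff hR₀).1, fun μ ν σ => fourierT_of_isConvolution,
    fun δ => fourierT_dirac, fun μ ν σ hσ hσ₀ => ?_⟩
  have hprod : fourierT μ * fourierT ν = 0 := by
    rw [← fourierT_of_isConvolution hσ, fourierT_eq_zero_iff hR₀]
    exact hσ₀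
  exact (mul_eq_zero.1 hprod).imp (fourierT_eq_zero_iff hR₀).1 (fourierT_eq_zero_iff hR₀).1

/-- The Fourier transform `F(μ) = ∑ (μ(x^k)/k!) T^k` on bounded distributions on the
Tate algebra of radius `R = p^{n-1/(p-1)}` is injective, takes convolution (defined via
the moments `(μ*ν)(x^k) = ∑_{m ≤ k} (k choose m) μ(x^m) ν(x^{k-m})`) to the product of
power series, and takes the Dirac distribution at `0` (i.e. `f ↦ a_0`) to `1`.
In particular the bounded distributions form an integral domain under convolution
(no zero divisors).  Here `K` plays the role of `ℂ_p`. -/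
theorem statement13 (p : ℕ) [Fact p.Prime] (hodd : Odd p)
    {K : Type*} [NormedField K] [CompleteSpace K] [IsAlgClosed K] [Algebra ℚ_[p] K]
    [CharZero K]
    (hnorm : ∀ x : ℚ_[p], ‖(algebraMap ℚ_[p] K) x‖ = ‖x‖)
    (hna : ∀ x y : K, ‖x + y‖ ≤ max ‖x‖ ‖y‖)
    (n : ℕ) (R : ℝ) (hR : R = (p : ℝ) ^ ((n : ℝ) - 1 / ((p : ℝ) - 1))) :
    (∀ μ : BDist K R, fourierT μ = 0 → ∀ a : {a : ℕ → K // IsTate R a}, μ.toFun a = 0) ∧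
    (∀ μ ν σ : BDist K R,
        (∀ k : ℕ, σ.toFun (tateMono R k) =
            ∑ m ∈ Finset.range (k + 1),
              (k.choose m : K) * μ.toFun (tateMono R m) * ν.toFun (tateMono R (k - m))) →
        fourierT σ = fourierT μ * fourierT ν) ∧
    (∀ δ : BDist K R, (∀ a : {a : ℕ → K // IsTate R a}, δ.toFun a = (a : ℕ → K) 0) →
        fourierT δ = 1) ∧
    (∀ μ ν σ : BDist K R,
        (∀ k : ℕ, σ.toFun (tateMono R k) =
            ∑ m ∈ Finset.range (k + 1),
              (k.choose m : K) * μ.toFun (tateMono R m) * ν.toFun (tateMono R (k - m))) →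
        (∀ a : {a : ℕ → K // IsTate R a}, σ.toFun a = 0) →
        (∀ a : {a : ℕ → K // IsTate R a}, μ.toFun a = 0) ∨
        (∀ a : {a : ℕ → K // IsTate R a}, ν.toFun a = 0)) :=
  statement13_general p n R hR
end

section
/- Let p be an odd prime, n ≥ 0 an integer, and R = p^{n - 1/(p-1)}. Let g be an isometric ring automorphism of ℂ_p (such g automatically fixes ℚ_p pointwise), let c ∈ ℚ_p with |c| < p^{-n}, and let μ be a bounded distribution on the Tate algebra of radius R over ℂ_p. For f = Σ_k a_k x^k in the Tate algebra write f^g = Σ_k g(a_k) x^k, and let E_c = Σ_k (c^k/k!) x^k, which lies in the Tate algebra of radius R. Define (g·μ)(f) = g(μ(f^{g^{-1}} · E_c)). Then g·μ is a bounded distribution, and its Fourier transform Σ_k ((g·μ)(x^k)/k!) T^k is obtained from the Fourier transform Σ_k (μ(x^k)/k!) T^k of μ by substituting T ↦ T + c and then applying g to all coefficients. (In the paper, c = log_p(χ(g)) for g in the absolute Galois group of ℚ_p(μ_{p^n}) and χ the cyclotomic character; this identity says the Fourier transform intertwines the Galois action on distributions with Colmez's action on B_Sen.) -/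
open Filter Topology

/-- The Cauchy product of two coefficient sequences (i.e. the coefficients of the
product of the corresponding power series). -/
noncomputable def seqMul {K : Type*} [NormedField K] (a b : ℕ → K) : ℕ → K :=
  fun k => ∑ m ∈ Finset.range (k + 1), a m * b (k - m)

/-!
By Legendre's formula `v_p(k!) ≤ k/(p-1)`, so `‖c^k/k!‖ R^k ≤ (‖c‖ R p^{1/(p-1)})^k` and `E_c`
lies in the Tate algebra once `‖c‖ ≤ p^{-n-1}`. Over an ultrametric field the Gauss norm is
submultiplicative for the Cauchy product, which makes `f ↦ f^{g⁻¹} E_c` a bounded operator and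
`g·μ` a bounded distribution. Truncating a Tate series converges in the Gauss norm, so a bounded
distribution is computed from its moments, `μ(f) = ∑ a_k μ(x^k)`. For `f = x^j E_c` this reads
`(g·μ)(x^j) = g(∑_k c^k/k! · μ(x^{j+k}))`; dividing by `j!` gives the coefficient of `T^j` in
`F_μ(T + c)`.
-/

lemma tendsto_mul_of_add_eq {α β : ℕ → ℝ} (hα : Tendsto α atTop (𝓝 0))
    (hβ : Tendsto β atTop (𝓝 0)) (hα0 : ∀ i, 0 ≤ α i) (hβ0 : ∀ i, 0 ≤ β i)
    {m n : ℕ → ℕ} (hmn : ∀ k, m k + n k = k) :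
    Tendsto (fun k => α (m k) * β (n k)) atTop (𝓝 0) := by
  obtain ⟨A, hA⟩ := hα.bddAbove_range
  obtain ⟨B, hB⟩ := hβ.bddAbove_range
  have hαA : ∀ i, α i < max A B + 1 := fun i =>
    (hA ⟨i, rfl⟩).trans_lt ((le_max_left A B).trans_lt (lt_add_one _))
  have hβB : ∀ i, β i < max A B + 1 := fun i =>
    (hB ⟨i, rfl⟩).trans_lt ((le_max_right A B).trans_lt (lt_add_one _))
  set T := max A B + 1
  have hT : 0 < T := (hα0 0).trans_lt (hαA 0)
  rw [Metric.tendsto_atTop]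
  intro ε hε
  have hεT : 0 < ε / T := div_pos hε hT
  obtain ⟨N, hN⟩ := eventually_atTop.1 <|
    (hα.eventually (gt_mem_nhds hεT)).and (hβ.eventually (gt_mem_nhds hεT))
  refine ⟨2 * N, fun k hk => ?_⟩
  rw [Real.dist_0_eq_abs, abs_of_nonneg (mul_nonneg (hα0 _) (hβ0 _))]
  -- one of the two indices `m k`, `n k` is at least `k / 2 ≥ N`
  rcases le_total N (m k) with h | h
  · calc α (m k) * β (n k) < ε / T * T :=
          mul_lt_mul'' (hN _ h).1 (hβB _) (hα0 _) (hβ0 _)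
      _ = ε := div_mul_cancel₀ ε hT.ne'
  · calc α (m k) * β (n k) < T * (ε / T) :=
          mul_lt_mul'' (hαA _) (hN _ (by have := hmn k; omega)).2 (hα0 _) (hβ0 _)
      _ = ε := mul_div_cancel₀ ε hT.ne'

section TateAlgebra

variable {K : Type*} [NormedField K] {R : ℝ} {a b : ℕ → K}

namespace IsTate

lemma add (ha : IsTate R a) (hb : IsTate R b) : IsTate R (a + b) := by
  refine squeeze_zero_norm (fun k => ?_) (by simpa using ha.norm.add hb.norm)
  simp only [Pi.add_apply, Real.norm_eq_abs, abs_mul, abs_norm, abs_pow]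
  calc ‖a k + b k‖ * |R| ^ k ≤ (‖a k‖ + ‖b k‖) * |R| ^ k := by gcongr; exact norm_add_le _ _
    _ = _ := by ring

lemma const_mul (r : K) (ha : IsTate R a) : IsTate R (fun k => r * a k) := by
  simpa [IsTate, mul_assoc] using Tendsto.const_mul ‖r‖ ha

lemma comp_norm_eq {L : Type*} [NormedField L] {f : K → L} (hf : ∀ x, ‖f x‖ = ‖x‖)
    (ha : IsTate R a) : IsTate R (fun k => f (a k)) := by
  simpa only [IsTate, hf] using ha

lemma le_tateNorm (ha : IsTate R a) (k : ℕ) : ‖a k‖ * R ^ k ≤ tateNorm R a :=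
  le_ciSup ha.bddAbove_range k

lemma tateNorm_nonneg (ha : IsTate R a) : 0 ≤ tateNorm R a :=
  (norm_nonneg (a 0)).trans (by simpa using ha.le_tateNorm 0)

end IsTate

lemma tateNorm_comp_norm_eq {L : Type*} [NormedField L] {f : K → L} (hf : ∀ x, ‖f x‖ = ‖x‖)
    (a : ℕ → K) : tateNorm R (fun k => f (a k)) = tateNorm R a := by
  simp only [tateNorm, hf]

variable (K R) in
def tateSubmodule : Submodule K (ℕ → K) where
  carrier := {a | IsTate R a}
  add_mem' := IsTate.add
  zero_mem' := by simp [IsTate]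
  smul_mem' r _ ha := ha.const_mul r

def BDist.toLinearMap (μ : BDist K R) : tateSubmodule K R →ₗ[K] K where
  toFun a := μ.toFun ⟨a, a.2⟩
  map_add' a b := μ.map_add' ⟨a, a.2⟩ ⟨b, b.2⟩ ⟨a + b, (a + b).2⟩ rfl
  map_smul' r a := μ.map_smul' r ⟨a, a.2⟩ ⟨r • a, (r • a).2⟩ rfl

lemma BDist.exists_bound_nonneg (μ : BDist K R) :
    ∃ C, 0 ≤ C ∧ ∀ a : {a : ℕ → K // IsTate R a}, ‖μ.toFun a‖ ≤ C * tateNorm R (a : ℕ → K) := by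
  obtain ⟨C, hC⟩ := μ.bound'
  refine ⟨max C 0, le_max_right _ _, fun a => (hC a).trans ?_⟩
  exact mul_le_mul_of_nonneg_right (le_max_left _ _) a.2.tateNorm_nonneg

lemma BDist.hasSum_moments (μ : BDist K R) (a : {a : ℕ → K // IsTate R a}) :
    HasSum (fun k => (a : ℕ → K) k * μ.toFun (tateMono R k)) (μ.toFun a) := by
  obtain ⟨C, hC0, hC⟩ := μ.exists_bound_nonneg
  let M : ℕ → tateSubmodule K R := fun k => ⟨_, (tateMono R k).2⟩
  let res : Finset ℕ → tateSubmodule K R := fun s => ⟨a, a.2⟩ - ∑ k ∈ s, (a : ℕ → K) k • M k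
  have hres : ∀ s i, (res s : ℕ → K) i = if i ∈ s then 0 else (a : ℕ → K) i := by
    intro s i
    simp only [res, M, tateMono, SetLike.mk_smul_mk, AddSubgroupClass.coe_sub,
      AddSubmonoidClass.coe_finsetSum, Pi.sub_apply, Finset.sum_apply, Pi.smul_apply, smul_eq_mul,
      mul_ite, mul_one, mul_zero, Finset.sum_ite_eq]
    split_ifs <;> simp only [sub_self, sub_zero]
  have hμres : ∀ s, μ.toFun a - ∑ k ∈ s, (a : ℕ → K) k * μ.toFun (tateMono R k) =
      μ.toLinearMap (res s) := by
    intro s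
    simp only [res, map_sub, map_sum, map_smul, smul_eq_mul]
    rfl
  rw [HasSum, SummationFilter.unconditional_filter, Metric.tendsto_nhds]
  intro ε hε
  have hδ : 0 < ε / (C + 1) := by positivity
  obtain ⟨N, hN⟩ := eventually_atTop.1 (a.2.eventually (gt_mem_nhds hδ))
  filter_upwards [Filter.eventually_ge_atTop (Finset.range N)] with s hs
  have hres_le : tateNorm R (res s : ℕ → K) ≤ ε / (C + 1) := ciSup_le fun i => by
    rw [hres]
    split_ifs with hi
    · simpa using hδ.le
    · exact (hN i (not_lt.1 fun h => hi (hs (Finset.mem_range.2 h)))).le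
  rw [dist_comm, dist_eq_norm, hμres]
  calc ‖μ.toLinearMap (res s)‖ ≤ C * tateNorm R (res s : ℕ → K) := hC ⟨res s, (res s).2⟩
    _ ≤ C * (ε / (C + 1)) := by gcongr
    _ < ε := by rw [mul_div_assoc', div_lt_iff₀ (by positivity)]; linarith

lemma seqMul_add_left (a a' b : ℕ → K) : seqMul (a + a') b = seqMul a b + seqMul a' b := by
  funext k
  simp only [seqMul, Pi.add_apply, add_mul, Finset.sum_add_distrib]

lemma seqMul_smul_left (r : K) (a b : ℕ → K) : seqMul (r • a) b = r • seqMul a b := by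
  funext k
  simp only [seqMul, Pi.smul_apply, smul_eq_mul, Finset.mul_sum, mul_assoc]

lemma seqMul_tateMono_left (j : ℕ) (b : ℕ → K) (i : ℕ) :
    seqMul ((tateMono R j : {a : ℕ → K // IsTate R a}) : ℕ → K) b i =
      if j ≤ i then b (i - j) else 0 := by
  simp [seqMul, tateMono]

lemma BDist.hasSum_moments_seqMul_tateMono (μ : BDist K R) (j : ℕ) (b : ℕ → K)
    (f : {a : ℕ → K // IsTate R a})
    (hf : (f : ℕ → K) = seqMul ((tateMono R j : {a : ℕ → K // IsTate R a}) : ℕ → K) b) :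
    HasSum (fun k => b k * μ.toFun (tateMono R (j + k))) (μ.toFun f) := by
  have h := (hasSum_nat_add_iff' j).2 (μ.hasSum_moments f)
  have hhead : ∀ i ∈ Finset.range j, (f : ℕ → K) i * μ.toFun (tateMono R i) = 0 := by
    intro i hi
    rw [hf, seqMul_tateMono_left, if_neg (by simpa using hi), zero_mul]
  rw [Finset.sum_eq_zero hhead, sub_zero] at h
  simpa [hf, seqMul_tateMono_left, add_comm] using h

section Ultrametric

variable [IsUltrametricDist K]

lemma exists_norm_seqMul_mul_pow_le (hR : 0 ≤ R) (a b : ℕ → K) (k : ℕ) :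
    ∃ m ≤ k, ‖seqMul a b k‖ * R ^ k ≤ (‖a m‖ * R ^ m) * (‖b (k - m)‖ * R ^ (k - m)) := by
  obtain ⟨m, hm, hle⟩ := IsUltrametricDist.exists_norm_finsetSum_le_of_nonempty
    Finset.nonempty_range_add_one (fun m => a m * b (k - m))
  have hmk : m ≤ k := Nat.lt_succ_iff.1 (Finset.mem_range.1 hm)
  refine ⟨m, hmk, ?_⟩
  calc ‖seqMul a b k‖ * R ^ k ≤ ‖a m * b (k - m)‖ * R ^ (m + (k - m)) := by
        rw [Nat.add_sub_cancel' hmk]; gcongr; exact hle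
    _ = (‖a m‖ * R ^ m) * (‖b (k - m)‖ * R ^ (k - m)) := by rw [norm_mul, pow_add]; ring

lemma IsTate.seqMul (hR : 0 ≤ R) (ha : IsTate R a) (hb : IsTate R b) :
    IsTate R (seqMul a b) := by
  choose m hm hle using exists_norm_seqMul_mul_pow_le hR a b
  exact squeeze_zero (fun k => by positivity) hle <|
    tendsto_mul_of_add_eq ha hb (fun _ => by positivity) (fun _ => by positivity)
      fun k => Nat.add_sub_cancel' (hm k)

lemma tateNorm_seqMul_le (hR : 0 ≤ R) (ha : IsTate R a) (hb : IsTate R b) :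
    tateNorm R (seqMul a b) ≤ tateNorm R a * tateNorm R b :=
  ciSup_le fun k => by
    obtain ⟨m, -, hle⟩ := exists_norm_seqMul_mul_pow_le hR a b k
    exact hle.trans <| mul_le_mul (ha.le_tateNorm m) (hb.le_tateNorm _) (by positivity)
      ha.tateNorm_nonneg

end Ultrametric

lemma norm_ringEquiv_symm_apply {g : K ≃+* K} (hg : ∀ x, ‖g x‖ = ‖x‖) (x : K) :
    ‖g.symm x‖ = ‖x‖ := by
  rw [← hg, g.apply_symm_apply]

section Twist

variable [IsUltrametricDist K] (hR : 0 ≤ R) (g : K ≃+* K) (hg : ∀ x, ‖g x‖ = ‖x‖)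
  {e : ℕ → K} (he : IsTate R e)

include hR hg he in
lemma isTate_seqMul_symm_apply (ha : IsTate R a) :
    IsTate R (seqMul (fun k => g.symm (a k)) e) :=
  (ha.comp_norm_eq (norm_ringEquiv_symm_apply hg)).seqMul hR he

noncomputable def BDist.twist (μ : BDist K R) : BDist K R where
  toFun a := g (μ.toFun ⟨seqMul (fun k => g.symm ((a : ℕ → K) k)) e,
    isTate_seqMul_symm_apply hR g hg he a.2⟩)
  map_add' a b c hc := by
    rw [← map_add]
    congr 1
    refine μ.map_add' _ _ _ ?_
    change seqMul _ e = seqMul _ e + seqMul _ e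
    rw [← seqMul_add_left, hc]
    exact congrArg (seqMul · e) (funext fun k => map_add g.symm _ _)
  map_smul' r a b hb := by
    rw [← g.apply_symm_apply r, ← map_mul]
    congr 1
    refine μ.map_smul' _ _ _ ?_
    change seqMul _ e = g.symm r • seqMul _ e
    rw [← seqMul_smul_left, hb]
    exact congrArg (seqMul · e) (funext fun k => map_mul g.symm _ _)
  bound' := by
    obtain ⟨C, hC0, hC⟩ := μ.exists_bound_nonneg
    refine ⟨C * tateNorm R e, fun a => ?_⟩
    rw [hg]
    calc _ ≤ C * tateNorm R (seqMul (fun k => g.symm ((a : ℕ → K) k)) e) := hC _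
      _ ≤ C * (tateNorm R (fun k => g.symm ((a : ℕ → K) k)) * tateNorm R e) :=
          mul_le_mul_of_nonneg_left (tateNorm_seqMul_le hR
            (a.2.comp_norm_eq (norm_ringEquiv_symm_apply hg)) he) hC0
      _ = C * tateNorm R e * tateNorm R (a : ℕ → K) := by
          rw [tateNorm_comp_norm_eq (norm_ringEquiv_symm_apply hg)]; ring

lemma BDist.twist_tateMono (μ : BDist K R) (j : ℕ) :
    (μ.twist hR g hg he).toFun (tateMono R j) =
      g (∑' k, e k * μ.toFun (tateMono R (j + k))) := by
  have hmono : (fun k => g.symm (((tateMono R j : {a : ℕ → K // IsTate R a}) : ℕ → K) k)) =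
      ((tateMono R j : {a : ℕ → K // IsTate R a}) : ℕ → K) := by
    funext k
    simp only [tateMono]
    split_ifs <;> simp
  exact congrArg g
    (μ.hasSum_moments_seqMul_tateMono j e _ (congrArg (seqMul · e) hmono)).tsum_eq.symm

end Twist

end TateAlgebra

namespace Padic

variable {p : ℕ} [hp : Fact p.Prime]

lemma inv_norm_factorial_le (k : ℕ) :
    ‖(k.factorial : ℚ_[p])‖⁻¹ ≤ ((p : ℝ) ^ (1 / ((p : ℝ) - 1))) ^ k := by
  have hp1 : (1 : ℝ) < p := mod_cast hp.out.one_lt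
  -- Legendre: `(p - 1) v_p(k!) = k - s_p(k) ≤ k`
  have hv : (p - 1) * padicValNat p k.factorial ≤ k := by
    rw [sub_one_mul_padicValNat_factorial]
    exact Nat.sub_le _ _
  have hv' : (padicValNat p k.factorial : ℝ) ≤ 1 / ((p : ℝ) - 1) * k := by
    have hcast : ((p - 1 : ℕ) : ℝ) * padicValNat p k.factorial ≤ k := mod_cast hv
    rw [Nat.cast_sub hp.out.one_le, Nat.cast_one] at hcast
    rw [one_div_mul_eq_div, le_div_iff₀ (by linarith)]
    linarith
  rw [norm_eq_zpow_neg_valuation (mod_cast k.factorial_ne_zero), valuation_natCast, zpow_neg,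
    inv_inv, zpow_natCast, ← Real.rpow_natCast, ← Real.rpow_mul_natCast (by positivity)]
  exact Real.rpow_le_rpow_of_exponent_le hp1.le hv'

lemma isTate_expCoeff {c : ℚ_[p]} {R : ℝ} (hR : 0 ≤ R)
    (hcR : ‖c‖ * R * (p : ℝ) ^ (1 / ((p : ℝ) - 1)) < 1) :
    IsTate R (fun k => c ^ k / (k.factorial : ℚ_[p])) := by
  refine squeeze_zero (fun k => by positivity) (fun k => ?_)
    (tendsto_pow_atTop_nhds_zero_of_lt_one (by positivity) hcR)
  rw [norm_div, norm_pow, div_eq_mul_inv, mul_pow, mul_pow]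
  calc ‖c‖ ^ k * ‖(k.factorial : ℚ_[p])‖⁻¹ * R ^ k
      ≤ ‖c‖ ^ k * ((p : ℝ) ^ (1 / ((p : ℝ) - 1))) ^ k * R ^ k := by
        gcongr; exact inv_norm_factorial_le k
    _ = _ := by ring

lemma norm_mul_rpow_mul_rpow_lt_one {c : ℚ_[p]} {n : ℕ} (hc : ‖c‖ < (p : ℝ) ^ (-(n : ℝ))) :
    ‖c‖ * (p : ℝ) ^ ((n : ℝ) - 1 / ((p : ℝ) - 1)) * (p : ℝ) ^ (1 / ((p : ℝ) - 1)) < 1 := by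
  have hp1 : (1 : ℝ) < p := mod_cast hp.out.one_lt
  have hp0 : (0 : ℝ) < p := one_pos.trans hp1
  -- norms of nonzero `p`-adic numbers are integral powers of `p`
  have hc' : ‖c‖ ≤ (p : ℝ) ^ (-(n : ℝ) - 1) := by
    have h := (norm_lt_pow_iff_norm_le_pow_sub_one c (-(n : ℤ))).1
      (by rwa [← Real.rpow_intCast, Int.cast_neg, Int.cast_natCast])
    rwa [← Real.rpow_intCast, Int.cast_sub, Int.cast_neg, Int.cast_natCast, Int.cast_one] at h
  calc ‖c‖ * (p : ℝ) ^ ((n : ℝ) - 1 / ((p : ℝ) - 1)) * (p : ℝ) ^ (1 / ((p : ℝ) - 1))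
      ≤ (p : ℝ) ^ (-(n : ℝ) - 1) * (p : ℝ) ^ ((n : ℝ) - 1 / ((p : ℝ) - 1)) *
          (p : ℝ) ^ (1 / ((p : ℝ) - 1)) := by gcongr
    _ = (p : ℝ) ^ (-1 : ℝ) := by rw [← Real.rpow_add hp0, ← Real.rpow_add hp0]; ring_nf
    _ < 1 := Real.rpow_lt_one_of_one_lt_of_neg hp1 (by norm_num)

end Padic

lemma pow_div_factorial_mul_div_factorial {F : Type*} [Field F] [CharZero F] (x y : F)
    (j k : ℕ) :
    x ^ k / (k.factorial : F) * y / (j.factorial : F) =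
      y / ((j + k).factorial : F) * (((j + k).choose j : ℕ) : F) * x ^ k := by
  have h : (((j + k).choose j * k.factorial * j.factorial : ℕ) : F) = ((j + k).factorial : F) := by
    rw [add_comm j k, Nat.add_choose_mul_factorial_mul_factorial]
  have hchoose : (((j + k).choose j : ℕ) : F) ≠ 0 :=
    Nat.cast_ne_zero.2 (Nat.choose_pos (Nat.le_add_right j k)).ne'
  push_cast at h
  rw [← h]
  field_simp


theorem statement17_general (p : ℕ) [Fact p.Prime]
    {K : Type*} [NormedField K] [Algebra ℚ_[p] K]
    [CharZero K]
    (hnorm : ∀ x : ℚ_[p], ‖(algebraMap ℚ_[p] K) x‖ = ‖x‖)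
    (hna : ∀ x y : K, ‖x + y‖ ≤ max ‖x‖ ‖y‖)
    (n : ℕ) (R : ℝ) (hR : R = (p : ℝ) ^ ((n : ℝ) - 1 / ((p : ℝ) - 1)))
    (g : K ≃+* K) (hg : ∀ x : K, ‖g x‖ = ‖x‖)
    (c : ℚ_[p]) (hc : ‖c‖ < (p : ℝ) ^ (-(n : ℝ)))
    (μ : BDist K R) :
    IsTate R (fun k : ℕ => (algebraMap ℚ_[p] K c) ^ k / (k.factorial : K)) ∧
    (∀ a : ℕ → K, IsTate R a →
        IsTate R (seqMul (fun k => g.symm (a k))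
          (fun k => (algebraMap ℚ_[p] K c) ^ k / (k.factorial : K)))) ∧
    ∃ gμ : BDist K R,
      (∀ (a : {a : ℕ → K // IsTate R a})
          (h : IsTate R (seqMul (fun k => g.symm ((a : ℕ → K) k))
            (fun k => (algebraMap ℚ_[p] K c) ^ k / (k.factorial : K)))),
          gμ.toFun a = g (μ.toFun ⟨seqMul (fun k => g.symm ((a : ℕ → K) k))
            (fun k => (algebraMap ℚ_[p] K c) ^ k / (k.factorial : K)), h⟩)) ∧
      (∀ j : ℕ, gμ.toFun (tateMono R j) / (j.factorial : K) =
          g (∑' k : ℕ, μ.toFun (tateMono R (j + k)) / ((j + k).factorial : K) *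
            (((j + k).choose j : ℕ) : K) * (algebraMap ℚ_[p] K c) ^ k)) := by
  have := IsUltrametricDist.isUltrametricDist_of_forall_norm_add_le_max_norm hna
  have hR0 : 0 ≤ R := hR ▸ by positivity
  have hE : IsTate R (fun k : ℕ => (algebraMap ℚ_[p] K c) ^ k / (k.factorial : K)) := by
    have hcR : ‖c‖ * R * (p : ℝ) ^ (1 / ((p : ℝ) - 1)) < 1 :=
      hR ▸ Padic.norm_mul_rpow_mul_rpow_lt_one hc
    simpa only [map_div₀, map_pow, map_natCast] using
      (Padic.isTate_expCoeff hR0 hcR).comp_norm_eq hnorm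
  refine ⟨hE, fun a ha => isTate_seqMul_symm_apply hR0 g hg hE ha,
    μ.twist hR0 g hg hE, fun a h => rfl, fun j => ?_⟩
  rw [BDist.twist_tateMono, ← map_natCast g j.factorial, ← map_div₀, ← tsum_div_const]
  exact congrArg g (tsum_congr fun k => pow_div_factorial_mul_div_factorial _ _ j k)

/-- Galois action on distributions versus Colmez's action on `B_Sen`.  Let `g` be an
isometric ring automorphism of `K` (`K` playing the role of `ℂ_p`), let `c ∈ ℚ_p`
with `|c| < p^{-n}`, and let `μ` be a bounded distribution on the Tate algebra of
radius `R = p^{n-1/(p-1)}`.  Then `E_c = ∑ (c^k/k!) x^k` lies in the Tate algebra,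
as does `f^{g^{-1}} · E_c` for any `f` in it; the functional
`(g·μ)(f) = g(μ(f^{g^{-1}} · E_c))` is again a bounded distribution; and the
Fourier transform of `g·μ` is obtained from that of `μ` by substituting
`T ↦ T + c` and applying `g` to all coefficients:
`(F(g·μ))_j = g(∑_{k} F(μ)_{j+k} · ((j+k) choose j) · c^k)`. -/
theorem statement17 (p : ℕ) [Fact p.Prime] (hodd : Odd p)
    {K : Type*} [NormedField K] [CompleteSpace K] [IsAlgClosed K] [Algebra ℚ_[p] K]
    [CharZero K]
    (hnorm : ∀ x : ℚ_[p], ‖(algebraMap ℚ_[p] K) x‖ = ‖x‖)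
    (hna : ∀ x y : K, ‖x + y‖ ≤ max ‖x‖ ‖y‖)
    (n : ℕ) (R : ℝ) (hR : R = (p : ℝ) ^ ((n : ℝ) - 1 / ((p : ℝ) - 1)))
    (g : K ≃+* K) (hg : ∀ x : K, ‖g x‖ = ‖x‖)
    (c : ℚ_[p]) (hc : ‖c‖ < (p : ℝ) ^ (-(n : ℝ)))
    (μ : BDist K R) :
    IsTate R (fun k : ℕ => (algebraMap ℚ_[p] K c) ^ k / (k.factorial : K)) ∧
    (∀ a : ℕ → K, IsTate R a →
        IsTate R (seqMul (fun k => g.symm (a k))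
          (fun k => (algebraMap ℚ_[p] K c) ^ k / (k.factorial : K)))) ∧
    ∃ gμ : BDist K R,
      (∀ (a : {a : ℕ → K // IsTate R a})
          (h : IsTate R (seqMul (fun k => g.symm ((a : ℕ → K) k))
            (fun k => (algebraMap ℚ_[p] K c) ^ k / (k.factorial : K)))),
          gμ.toFun a = g (μ.toFun ⟨seqMul (fun k => g.symm ((a : ℕ → K) k))
            (fun k => (algebraMap ℚ_[p] K c) ^ k / (k.factorial : K)), h⟩)) ∧
      (∀ j : ℕ, gμ.toFun (tateMono R j) / (j.factorial : K) =
          g (∑' k : ℕ, μ.toFun (tateMono R (j + k)) / ((j + k).factorial : K) *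
            (((j + k).choose j : ℕ) : K) * (algebraMap ℚ_[p] K c) ^ k)) :=
  statement17_general p hnorm hna n R hR g hg c hc μ
end
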